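/- arXiv:1605.02020 — 6 statements merged into one kernel-verified Lean document; each statement's English description precedes it below -/
import Mathlib

section
/- Let p > 0, E ⊆ ℝ≥0 and f : E → ℝ^d. Then the strong p-variation V_p(f,E) = sup over finite partitions t_0 ≤ t_1 ≤ ... ≤ t_n of E of Σ ‖f(t_i)-f(t_{i-1})‖^p is finite if and only if there exists a bounded nondecreasing function φ : E → ℝ and a map g : φ(E) → ℝ^d which is Hölder continuous with exponent 1/p and Hölder constant at most 1, such that f = g ∘ φ on E. -/
open Set

/-- The set of partition sums appearing in the definition of the strong `p`-variation
of `f` on `E`: sums `∑ ‖f (t (i+1)) - f (t i)‖ ^ p` over finite nondecreasing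
sequences of points of `E`. -/
def pVarSums {X : Type*} [SeminormedAddCommGroup X] (p : ℝ)
    (f : ℝ → X) (E : Set ℝ) : Set ℝ :=
  {s | ∃ n : ℕ, ∃ t : ℕ → ℝ, (∀ i ≤ n, t i ∈ E) ∧ (∀ i < n, t i ≤ t (i + 1)) ∧
    s = ∑ i ∈ Finset.range n, ‖f (t (i + 1)) - f (t i)‖ ^ p}

section Aux

variable {X : Type*} [SeminormedAddCommGroup X] {p : ℝ} {f : ℝ → X} {E E' : Set ℝ}

lemma pVarSums_mono (h : E ⊆ E') : pVarSums p f E ⊆ pVarSums p f E' := by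
  rintro s ⟨n, t, h1, h2, h3⟩
  exact ⟨n, t, fun i hi => h (h1 i hi), h2, h3⟩

lemma zero_mem_pVarSums {t₀ : ℝ} (h : t₀ ∈ E) : (0:ℝ) ∈ pVarSums p f E :=
  ⟨0, fun _ => t₀, fun _ _ => h, fun i hi => absurd hi (Nat.not_lt_zero i), by simp⟩

lemma pVar_key (hB : BddAbove (pVarSums p f E)) {s t : ℝ} (hs : s ∈ E) (ht : t ∈ E)
    (hst : s ≤ t) :
    sSup (pVarSums p f (E ∩ Iic s)) + ‖f t - f s‖ ^ p ≤ sSup (pVarSums p f (E ∩ Iic t)) := by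
  have hBt : BddAbove (pVarSums p f (E ∩ Iic t)) := hB.mono (pVarSums_mono inter_subset_left)
  rw [← le_sub_iff_add_le]
  apply csSup_le ⟨0, zero_mem_pVarSums (mem_inter hs (mem_Iic.mpr (le_refl s)))⟩
  rintro a ⟨n, τ, h1, h2, rfl⟩
  rw [le_sub_iff_add_le]
  set τ' : ℕ → ℝ := fun i => if i ≤ n then τ i else if i = n+1 then s else t with hτ'
  have hv1 : ∀ i, i ≤ n → τ' i = τ i := fun i hi => if_pos hi
  have hv2 : τ' (n+1) = s := by
    show (if n+1 ≤ n then τ (n+1) else if n+1 = n+1 then s else t) = s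
    rw [if_neg (by omega), if_pos rfl]
  have hv3 : τ' (n+2) = t := by
    show (if n+2 ≤ n then τ (n+2) else if n+2 = n+1 then s else t) = t
    rw [if_neg (by omega), if_neg (by omega)]
  have hmem : (∑ i ∈ Finset.range n, ‖f (τ (i+1)) - f (τ i)‖ ^ p)
      + ‖f s - f (τ n)‖ ^ p + ‖f t - f s‖ ^ p ∈ pVarSums p f (E ∩ Iic t) := by
    refine ⟨n+2, τ', ?_, ?_, ?_⟩
    · intro i hi
      rcases Nat.lt_or_ge i (n+1) with h | h
      · rw [hv1 i (by omega)]
        exact mem_inter (h1 i (by omega)).1 (mem_Iic.mpr ((mem_Iic.mp (h1 i (by omega)).2).trans hst))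
      · rcases Nat.eq_or_lt_of_le h with h' | h'
        · rw [← h', hv2]
          exact mem_inter hs (mem_Iic.mpr hst)
        · have : i = n + 2 := by omega
          rw [this, hv3]
          exact mem_inter ht (mem_Iic.mpr (le_refl t))
    · intro i hi
      rcases lt_trichotomy i n with h | h | h
      · rw [hv1 i (by omega), hv1 (i+1) (by omega)]; exact h2 i h
      · subst h; rw [hv1 i le_rfl, hv2]; exact mem_Iic.mp (h1 i le_rfl).2
      · have hi' : i = n + 1 := by omega
        subst hi'
        rw [hv2, hv3]
        exact hst
    · rw [Finset.sum_range_succ, Finset.sum_range_succ]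
      congr 1
      · congr 1
        · apply Finset.sum_congr rfl
          intro i hi
          simp only [Finset.mem_range] at hi
          rw [hv1 i (by omega), hv1 (i+1) (by omega)]
        · rw [hv2, hv1 n le_rfl]
      · rw [hv2, hv3]
  have hge : (∑ i ∈ Finset.range n, ‖f (τ (i+1)) - f (τ i)‖ ^ p) + ‖f t - f s‖ ^ p
      ≤ (∑ i ∈ Finset.range n, ‖f (τ (i+1)) - f (τ i)‖ ^ p)
        + ‖f s - f (τ n)‖ ^ p + ‖f t - f s‖ ^ p := by
    have h0 := Real.rpow_nonneg (norm_nonneg (f s - f (τ n))) p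
    linarith
  exact hge.trans (le_csSup hBt hmem)

lemma rpow_le_one_div_of_rpow_le {p x y : ℝ} (hp : 0 < p) (hx : 0 ≤ x) (h : x ^ p ≤ y) :
    x ≤ y ^ (1/p) := by
  have h2 := Real.rpow_le_rpow (Real.rpow_nonneg hx p) h (le_of_lt (one_div_pos.2 hp))
  rwa [← Real.rpow_mul hx, mul_one_div_cancel hp.ne', Real.rpow_one] at h2

end Aux

/-- `V_p(f,E)` is finite iff `f = g ∘ φ` with `φ` bounded nondecreasing
and `g` Hölder continuous with exponent `1/p` and Hölder constant at most `1` on `φ(E)`. -/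
theorem stmt0 (p : ℝ) (hp : 0 < p) (d : ℕ) (E : Set ℝ) (hE : E ⊆ Set.Ici (0 : ℝ))
    (f : ℝ → EuclideanSpace ℝ (Fin d)) :
    BddAbove (pVarSums p f E) ↔
      ∃ φ : ℝ → ℝ, ∃ g : ℝ → EuclideanSpace ℝ (Fin d),
        BddAbove (φ '' E) ∧ BddBelow (φ '' E) ∧ MonotoneOn φ E ∧
        (∀ σ ∈ φ '' E, ∀ τ ∈ φ '' E, ‖g τ - g σ‖ ≤ 1 * |τ - σ| ^ (1 / p)) ∧
        ∀ t ∈ E, f t = g (φ t) := by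
  constructor
  · intro hB
    classical
    set φ : ℝ → ℝ := fun t => sSup (pVarSums p f (E ∩ Iic t)) with hφdef
    have hBsub : ∀ t : ℝ, BddAbove (pVarSums p f (E ∩ Iic t)) :=
      fun t => hB.mono (pVarSums_mono inter_subset_left)
    have hφ0 : ∀ t ∈ E, 0 ≤ φ t :=
      fun t ht => le_csSup (hBsub t) (zero_mem_pVarSums (mem_inter ht (mem_Iic.mpr (le_refl t))))
    have hmono : ∀ s ∈ E, ∀ t ∈ E, s ≤ t → φ s ≤ φ t := by
      intro s hs t ht hst
      have hk := pVar_key hB hs ht hst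
      have h0 := Real.rpow_nonneg (norm_nonneg (f t - f s)) p
      simp only [hφdef]
      linarith
    have hkey : ∀ s ∈ E, ∀ t ∈ E, ‖f t - f s‖ ≤ |φ t - φ s| ^ (1/p) := by
      intro s hs t ht
      rcases le_total s t with h | h
      · have hk := pVar_key hB hs ht h
        have h1 : ‖f t - f s‖ ^ p ≤ φ t - φ s := by simp only [hφdef]; linarith
        have h2 := rpow_le_one_div_of_rpow_le hp (norm_nonneg _) h1
        rwa [abs_of_nonneg (sub_nonneg.2 (hmono s hs t ht h))]
      · have hk := pVar_key hB ht hs h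
        have h1 : ‖f s - f t‖ ^ p ≤ φ s - φ t := by simp only [hφdef]; linarith
        have h2 := rpow_le_one_div_of_rpow_le hp (norm_nonneg _) h1
        rw [abs_sub_comm, abs_of_nonneg (sub_nonneg.2 (hmono t ht s hs h))]
        rwa [norm_sub_rev]
    set g : ℝ → EuclideanSpace ℝ (Fin d) :=
      fun σ => if h : σ ∈ φ '' E then f h.choose else 0 with hgdef
    have hgφ : ∀ t ∈ E, f t = g (φ t) := by
      intro t ht
      have hmem : φ t ∈ φ '' E := mem_image_of_mem φ ht
      have hgv : g (φ t) = f hmem.choose := by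
        simp only [hgdef]
        rw [dif_pos hmem]
      obtain ⟨hx, hφx⟩ := hmem.choose_spec
      have hle := hkey hmem.choose hx t ht
      rw [hφx, sub_self, abs_zero,
        Real.zero_rpow (ne_of_gt (one_div_pos.2 hp))] at hle
      have hfe : f t - f hmem.choose = 0 := by rwa [← norm_le_zero_iff]
      rw [hgv]
      exact sub_eq_zero.mp hfe
    refine ⟨φ, g, ?_, ?_, ?_, ?_, hgφ⟩
    · refine ⟨sSup (pVarSums p f E), ?_⟩
      rintro σ ⟨t, ht, rfl⟩
      exact csSup_le_csSup hB ⟨0, zero_mem_pVarSums (mem_inter ht (mem_Iic.mpr (le_refl t)))⟩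
        (pVarSums_mono inter_subset_left)
    · refine ⟨0, ?_⟩
      rintro σ ⟨t, ht, rfl⟩
      exact hφ0 t ht
    · intro s hs t ht hst
      exact hmono s hs t ht hst
    · rintro σ ⟨s, hs, rfl⟩ τ ⟨t, ht, rfl⟩
      rw [one_mul, ← hgφ t ht, ← hgφ s hs]
      exact hkey s hs t ht
  · rintro ⟨φ, g, ⟨M, hM⟩, ⟨m, hm⟩, hmono, hHold, hfg⟩
    refine ⟨M - m, ?_⟩
    rintro s ⟨n, t, htE, htm, rfl⟩
    have step : ∀ i < n, ‖f (t (i+1)) - f (t i)‖ ^ p ≤ φ (t (i+1)) - φ (t i) := by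
      intro i hi
      have hi1 : t i ∈ E := htE i (by omega)
      have hi2 : t (i+1) ∈ E := htE (i+1) (by omega)
      have h1 := hHold (φ (t i)) (mem_image_of_mem φ hi1) (φ (t (i+1))) (mem_image_of_mem φ hi2)
      rw [one_mul] at h1
      rw [hfg _ hi2, hfg _ hi1]
      have habs : |φ (t (i+1)) - φ (t i)| = φ (t (i+1)) - φ (t i) :=
        abs_of_nonneg (sub_nonneg.2 (hmono hi1 hi2 (htm i hi)))
      calc ‖g (φ (t (i+1))) - g (φ (t i))‖ ^ p
          ≤ (|φ (t (i+1)) - φ (t i)| ^ (1/p)) ^ p :=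
            Real.rpow_le_rpow (norm_nonneg _) h1 hp.le
        _ = |φ (t (i+1)) - φ (t i)| := by
            rw [← Real.rpow_mul (abs_nonneg _), one_div_mul_cancel hp.ne', Real.rpow_one]
        _ = _ := habs
    calc ∑ i ∈ Finset.range n, ‖f (t (i+1)) - f (t i)‖ ^ p
        ≤ ∑ i ∈ Finset.range n, (φ (t (i+1)) - φ (t i)) :=
          Finset.sum_le_sum fun i hi => step i (Finset.mem_range.1 hi)
      _ = φ (t n) - φ (t 0) := Finset.sum_range_sub (fun i => φ (t i)) n
      _ ≤ M - m := sub_le_sub (hM (mem_image_of_mem φ (htE n le_rfl)))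
                     (hm (mem_image_of_mem φ (htE 0 (Nat.zero_le n))))
end

section
/- Let S ⊂ ℝ² be the closed wedge {(r cos θ, r sin θ) : r ≥ 0, 0 ≤ θ ≤ ξ} with 0 < ξ < 2π, with boundary edges ∂S₁ (angle 0) and ∂S₂ (angle ξ). Let v₁, v₂ ∈ ℝ² and z : [0,T] → S continuous with z(s) ≠ 0 for s ∈ (0,T). Suppose y : [0,T] → ℝ² satisfies y(t) = v₁ u₁(t) + v₂ u₂(t) where u₁, u₂ are continuous nondecreasing functions such that u_j increases only at times t with z(t) ∈ ∂S_j (j = 1,2), i.e., the Stieltjes measure du_j gives zero mass to {t : z(t) ∉ ∂S_j}. Then for every t ∈ [0,T], V₁(y,[0,t]) = ‖v₁‖(u₁(t)−u₁(0)) + ‖v₂‖(u₂(t)−u₂(0)). -/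
open Set Real

/-- The closed wedge `S` of angle `ξ` in `ℝ²` (polar coordinates). -/
def wedge (ξ : ℝ) : Set (EuclideanSpace ℝ (Fin 2)) :=
  {z | ∃ r θ : ℝ, 0 ≤ r ∧ 0 ≤ θ ∧ θ ≤ ξ ∧ z 0 = r * Real.cos θ ∧ z 1 = r * Real.sin θ}

/-- The boundary edge `∂S₁` at angle `0`. -/
def edge1 : Set (EuclideanSpace ℝ (Fin 2)) :=
  {z | ∃ r : ℝ, 0 ≤ r ∧ z 0 = r ∧ z 1 = 0}

/-- The boundary edge `∂S₂` at angle `ξ`. -/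
def edge2 (ξ : ℝ) : Set (EuclideanSpace ℝ (Fin 2)) :=
  {z | ∃ r : ℝ, 0 ≤ r ∧ z 0 = r * Real.cos ξ ∧ z 1 = r * Real.sin ξ}

/-!
Put `W = ‖v₁‖ u₁ + ‖v₂‖ u₂`. By the triangle inequality every increment of `y` is bounded by
the corresponding increment of `W`, so `V₁(y, [0, t]) ≤ W t - W 0`. Conversely, at a time in
`(0, T)` the path `z` is off the vertex, hence (the edges being closed and meeting only at the
vertex) off one edge on a whole neighbourhood, so one of `u₁`, `u₂` is frozen there and the
triangle inequality is an equality for nearby increments. A Lebesgue-number partition of any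
`[a, b] ⊂ (0, t)` then realizes `W b - W a` as a partition sum, and continuity of `W` lets
`a → 0`, `b → t`.
-/

open Filter Topology Metric

lemma edge2_eq_image (θ : ℝ) :
    edge2 θ = (fun r : ℝ => r • !₂[cos θ, sin θ]) '' Ici 0 := by
  ext z
  constructor
  · rintro ⟨r, hr, h0, h1⟩
    refine ⟨r, hr, ?_⟩
    ext i; fin_cases i <;> simp [h0, h1]
  · rintro ⟨r, hr, rfl⟩
    exact ⟨r, hr, by simp, by simp⟩

lemma isClosed_edge2 (θ : ℝ) : IsClosed (edge2 θ) := by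
  rw [edge2_eq_image]
  exact isClosedMap_smul_left _ _ isClosed_Ici

lemma edge2_zero : edge2 0 = edge1 := by
  ext z; simp [edge1, edge2]

lemma eq_zero_of_mem_edge1_of_mem_edge2 {ξ : ℝ} (hξ0 : 0 < ξ) (hξ : ξ < 2 * π)
    {w : EuclideanSpace ℝ (Fin 2)} (h₁ : w ∈ edge1) (h₂ : w ∈ edge2 ξ) : w = 0 := by
  obtain ⟨r, hr, hr0, hr1⟩ := h₁
  obtain ⟨ρ, hρ, hρ0, hρ1⟩ := h₂
  have hw0 : w 0 = 0 := by
    rcases mul_eq_zero.1 (hρ1.symm.trans hr1) with hρ | hsin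
    · rw [hρ0, hρ, zero_mul]
    · have hπ : ξ = π := by
        have := (sin_eq_zero_iff_of_lt_of_lt (x := ξ - π) (by linarith) (by linarith)).1
          (by rw [sin_sub_pi, hsin, neg_zero])
        linarith
      rw [hπ, cos_pi] at hρ0
      linarith
  ext i; fin_cases i
  · exact hw0
  · exact hr1

lemma exists_chain_of_eventually {P : ℝ → ℝ → Prop} {a b : ℝ} (hab : a ≤ b)
    (hP : ∀ c ∈ Icc a b, ∀ᶠ x in 𝓝 (c, c), P x.1 x.2) :
    ∃ n : ℕ, ∃ p : ℕ → ℝ, p 0 = a ∧ p n = b ∧ Monotone p ∧ (∀ i ≤ n, p i ∈ Icc a b) ∧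
      ∀ i < n, P (p i) (p (i + 1)) := by
  choose! ε hε hball using fun c hc => Metric.eventually_nhds_iff_ball.1 (hP c hc)
  obtain ⟨δ, hδ, hLeb⟩ := lebesgue_number_lemma_of_metric
    (c := fun c : Icc a b => ball (c : ℝ) (ε c)) isCompact_Icc (fun _ => isOpen_ball)
    (fun x hx => mem_iUnion.2 ⟨⟨x, hx⟩, mem_ball_self (hε x hx)⟩)
  obtain ⟨n, hn⟩ := exists_nat_gt ((b - a) / δ)
  have hn0 : (0 : ℝ) < n := (div_nonneg (sub_nonneg.2 hab) hδ.le).trans_lt hn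
  set h := (b - a) / n
  have hh0 : 0 ≤ h := div_nonneg (sub_nonneg.2 hab) hn0.le
  have hhδ : h < δ := by rw [div_lt_iff₀ hn0]; rw [div_lt_iff₀ hδ] at hn; linarith
  have hnh : n * h = b - a := mul_div_cancel₀ _ hn0.ne'
  set p : ℕ → ℝ := fun i => a + i * h
  have hmem : ∀ i ≤ n, p i ∈ Icc a b := fun i hi => by
    have : (i : ℝ) ≤ n := by exact_mod_cast hi
    constructor <;> simp only [p] <;> nlinarith
  refine ⟨n, p, by simp [p], by simp only [p]; linarith, fun i j hij => by simp only [p]; gcongr,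
    hmem, fun i hi => ?_⟩
  obtain ⟨c, hc⟩ := hLeb (p i) (hmem i hi.le)
  have hnext : dist (p (i + 1)) (p i) < δ := by
    rw [Real.dist_eq, abs_lt]; simp only [p]; push_cast; constructor <;> linarith
  apply hball c c.2 (p i, p (i + 1))
  rw [mem_ball, Prod.dist_eq, max_lt_iff]
  exact ⟨hc (mem_ball_self hδ), hc hnext⟩

lemma zero_mem_pVarSums_s5 {X : Type*} [SeminormedAddCommGroup X] (p : ℝ) (f : ℝ → X)
    {E : Set ℝ} {e : ℝ} (he : e ∈ E) : (0 : ℝ) ∈ pVarSums p f E :=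
  ⟨0, fun _ => e, fun _ _ => he, fun _ h => absurd h (Nat.not_lt_zero _), by simp⟩

lemma pVarSums_mono_s5 {X : Type*} [SeminormedAddCommGroup X] (p : ℝ) (f : ℝ → X)
    {E F : Set ℝ} (hEF : E ⊆ F) : pVarSums p f E ⊆ pVarSums p f F := by
  rintro _ ⟨n, t, hmem, hmono, rfl⟩
  exact ⟨n, t, fun i hi => hEF (hmem i hi), hmono, rfl⟩

section

variable {X : Type*} [SeminormedAddCommGroup X] {f : ℝ → X} {W : ℝ → ℝ} {a b : ℝ}

lemma le_sub_of_mem_pVarSums_one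
    (hle : ∀ s ∈ Icc a b, ∀ r ∈ Icc a b, s ≤ r → ‖f r - f s‖ ≤ W r - W s)
    {x : ℝ} (hx : x ∈ pVarSums 1 f (Icc a b)) : x ≤ W b - W a := by
  have hW : MonotoneOn W (Icc a b) := fun s hs r hr hsr =>
    sub_nonneg.1 ((norm_nonneg _).trans (hle s hs r hr hsr))
  obtain ⟨n, p, hmem, hmono, rfl⟩ := hx
  calc ∑ i ∈ Finset.range n, ‖f (p (i + 1)) - f (p i)‖ ^ (1 : ℝ)
      ≤ ∑ i ∈ Finset.range n, (W (p (i + 1)) - W (p i)) := by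
        refine Finset.sum_le_sum fun i hi => ?_
        have hi := Finset.mem_range.1 hi
        rw [Real.rpow_one]
        exact hle _ (hmem i hi.le) _ (hmem (i + 1) hi) (hmono i hi)
    _ = W (p n) - W (p 0) := Finset.sum_range_sub (fun i => W (p i)) n
    _ ≤ W b - W a := by
        have hab : a ≤ b := (hmem 0 n.zero_le).1.trans (hmem 0 n.zero_le).2
        have h₁ := hW (hmem n le_rfl) (right_mem_Icc.2 hab) (hmem n le_rfl).2
        have h₂ := hW (left_mem_Icc.2 hab) (hmem 0 n.zero_le) (hmem 0 n.zero_le).1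
        linarith

lemma sub_mem_pVarSums_one (hab : a ≤ b)
    (heq : ∀ c ∈ Icc a b, ∀ᶠ x in 𝓝 (c, c), x.1 ≤ x.2 → ‖f x.2 - f x.1‖ = W x.2 - W x.1) :
    W b - W a ∈ pVarSums 1 f (Icc a b) := by
  obtain ⟨n, p, hp0, hpn, hmono, hmem, hstep⟩ :=
    exists_chain_of_eventually (P := fun s r => s ≤ r → ‖f r - f s‖ = W r - W s) hab heq
  refine ⟨n, p, hmem, fun i _ => hmono i.le_succ, ?_⟩
  rw [← hp0, ← hpn, ← Finset.sum_range_sub (fun i => W (p i))]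
  refine Finset.sum_congr rfl fun i hi => ?_
  rw [Real.rpow_one, hstep i (Finset.mem_range.1 hi) (hmono i.le_succ)]

lemma sub_le_of_forall_inner_sub_le {g : ℝ → ℝ} {M : ℝ} (hab : a < b)
    (hg : ContinuousOn g (Icc a b))
    (h : ∀ δ ∈ Ioo 0 ((b - a) / 2), g (b - δ) - g (a + δ) ≤ M) : g b - g a ≤ M := by
  have hmaps : MapsTo (fun δ => (b - δ, a + δ)) (Icc 0 ((b - a) / 2)) (Icc a b ×ˢ Icc a b) :=
    fun δ hδ => ⟨⟨by linarith [hδ.2], by linarith [hδ.1]⟩,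
      ⟨by linarith [hδ.1], by linarith [hδ.2]⟩⟩
  have hcont : ContinuousOn (fun δ => g (b - δ) - g (a + δ)) (Icc 0 ((b - a) / 2)) :=
    (hg.comp (continuousOn_const.sub continuousOn_id) fun δ hδ => (hmaps hδ).1).sub
      (hg.comp (continuousOn_const.add continuousOn_id) fun δ hδ => (hmaps hδ).2)
  have h0 : (0 : ℝ) ∈ Icc 0 ((b - a) / 2) := ⟨le_rfl, by linarith⟩
  simpa using ContinuousWithinAt.closure_le (s := Ioo 0 ((b - a) / 2))
    (by rw [closure_Ioo (by linarith)]; exact h0)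
    ((hcont 0 h0).mono Ioo_subset_Icc_self) continuousWithinAt_const h

theorem sSup_pVarSums_one_eq (hab : a ≤ b) (hW : ContinuousOn W (Icc a b))
    (hle : ∀ s ∈ Icc a b, ∀ r ∈ Icc a b, s ≤ r → ‖f r - f s‖ ≤ W r - W s)
    (heq : ∀ c ∈ Ioo a b, ∀ᶠ x in 𝓝 (c, c), x.1 ≤ x.2 → ‖f x.2 - f x.1‖ = W x.2 - W x.1) :
    sSup (pVarSums 1 f (Icc a b)) = W b - W a := by
  have hbdd : BddAbove (pVarSums 1 f (Icc a b)) :=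
    ⟨W b - W a, fun _ hx => le_sub_of_mem_pVarSums_one hle hx⟩
  refine le_antisymm (csSup_le ⟨0, zero_mem_pVarSums_s5 1 f (left_mem_Icc.2 hab)⟩
    fun _ hx => le_sub_of_mem_pVarSums_one hle hx) ?_
  rcases hab.eq_or_lt with rfl | hab
  · rw [sub_self]; exact le_csSup hbdd (zero_mem_pVarSums_s5 1 f (left_mem_Icc.2 le_rfl))
  refine sub_le_of_forall_inner_sub_le hab hW fun δ hδ => le_csSup hbdd ?_
  refine pVarSums_mono_s5 1 f (Icc_subset_Icc (by linarith [hδ.1]) (by linarith [hδ.1]))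
    (sub_mem_pVarSums_one (by linarith [hδ.2]) fun c hc => heq c ⟨?_, ?_⟩) <;>
    linarith [hc.1, hc.2, hδ.1]

end

lemma norm_smul_add_smul_le {E : Type*} [SeminormedAddCommGroup E] [NormedSpace ℝ E]
    {α β : ℝ} (hα : 0 ≤ α) (hβ : 0 ≤ β) (v w : E) :
    ‖α • v + β • w‖ ≤ α * ‖v‖ + β * ‖w‖ := by
  simpa [norm_smul, abs_of_nonneg hα, abs_of_nonneg hβ] using norm_add_le (α • v) (β • w)

lemma norm_smul_add_smul_of_eq_zero_or {E : Type*} [SeminormedAddCommGroup E]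
    [NormedSpace ℝ E] {α β : ℝ} (hα : 0 ≤ α) (hβ : 0 ≤ β) (h : α = 0 ∨ β = 0) (v w : E) :
    ‖α • v + β • w‖ = α * ‖v‖ + β * ‖w‖ := by
  rcases h with rfl | rfl <;> simp [norm_smul, abs_of_nonneg, *]

lemma eventually_eq_of_notMem {X : Type*} [TopologicalSpace X] {z : ℝ → X} {F : Set X}
    {u : ℝ → ℝ} {T c : ℝ} (hF : IsClosed F)
    (hflat : ∀ a b : ℝ, 0 ≤ a → a ≤ b → b ≤ T →
      (∀ q ∈ Ioo a b, z q ∉ F) → ∀ s ∈ Ioo a b, ∀ t ∈ Ioo a b, u s = u t)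
    (hc : c ∈ Ioo 0 T) (hzc : ContinuousAt z c) (hzF : z c ∉ F) :
    ∀ᶠ x in 𝓝 (c, c), u x.1 = u x.2 := by
  obtain ⟨l, r, hlr, hsub⟩ :=
    mem_nhds_iff_exists_Ioo_subset.1 (hzc.preimage_mem_nhds (hF.isOpen_compl.mem_nhds hzF))
  have hI : c ∈ Ioo (max l 0) (min r T) := ⟨max_lt hlr.1 hc.1, lt_min hlr.2 hc.2⟩
  filter_upwards [prod_mem_nhds (isOpen_Ioo.mem_nhds hI) (isOpen_Ioo.mem_nhds hI)] with x hx
  exact hflat _ _ (le_max_right _ _) (hI.1.trans hI.2).le (min_le_right _ _)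
    (fun q hq => hsub ⟨(le_max_left _ _).trans_lt hq.1, hq.2.trans_le (min_le_left _ _)⟩)
    _ hx.1 _ hx.2

lemma eventually_eq_or_eq_of_wedge {ξ T c : ℝ} (hξ0 : 0 < ξ) (hξ : ξ < 2 * π)
    {z : ℝ → EuclideanSpace ℝ (Fin 2)} {u₁ u₂ : ℝ → ℝ}
    (hflat1 : ∀ a b : ℝ, 0 ≤ a → a ≤ b → b ≤ T →
      (∀ q ∈ Ioo a b, z q ∉ edge1) → ∀ s ∈ Ioo a b, ∀ t ∈ Ioo a b, u₁ s = u₁ t)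
    (hflat2 : ∀ a b : ℝ, 0 ≤ a → a ≤ b → b ≤ T →
      (∀ q ∈ Ioo a b, z q ∉ edge2 ξ) → ∀ s ∈ Ioo a b, ∀ t ∈ Ioo a b, u₂ s = u₂ t)
    (hc : c ∈ Ioo 0 T) (hzc : ContinuousAt z c) (hz0 : z c ≠ 0) :
    ∀ᶠ x in 𝓝 (c, c), u₁ x.1 = u₁ x.2 ∨ u₂ x.1 = u₂ x.2 := by
  by_cases h₁ : z c ∈ edge1
  · have h₂ : z c ∉ edge2 ξ := fun h₂ => hz0 (eq_zero_of_mem_edge1_of_mem_edge2 hξ0 hξ h₁ h₂)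
    exact (eventually_eq_of_notMem (isClosed_edge2 ξ) hflat2 hc hzc h₂).mono fun _ => Or.inr
  · exact (eventually_eq_of_notMem (edge2_zero ▸ isClosed_edge2 0) hflat1 hc hzc h₁).mono
      fun _ => Or.inl

theorem stmt5_general (ξ : ℝ) (hξ0 : 0 < ξ) (hξ : ξ < 2 * π) (T : ℝ)
    (v₁ v₂ : EuclideanSpace ℝ (Fin 2))
    (z y : ℝ → EuclideanSpace ℝ (Fin 2)) (u₁ u₂ : ℝ → ℝ)
    (hzc : ContinuousOn z (Set.Icc 0 T))
    (hz0 : ∀ s ∈ Set.Ioo (0 : ℝ) T, z s ≠ 0)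
    (hu₁c : ContinuousOn u₁ (Set.Icc 0 T)) (hu₂c : ContinuousOn u₂ (Set.Icc 0 T))
    (hu₁m : MonotoneOn u₁ (Set.Icc 0 T)) (hu₂m : MonotoneOn u₂ (Set.Icc 0 T))
    (hy : ∀ s ∈ Set.Icc (0 : ℝ) T, y s = u₁ s • v₁ + u₂ s • v₂)
    (hflat1 : ∀ a b : ℝ, 0 ≤ a → a ≤ b → b ≤ T →
      (∀ q ∈ Set.Ioo a b, z q ∉ edge1) →
      ∀ s ∈ Set.Ioo a b, ∀ t ∈ Set.Ioo a b, u₁ s = u₁ t)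
    (hflat2 : ∀ a b : ℝ, 0 ≤ a → a ≤ b → b ≤ T →
      (∀ q ∈ Set.Ioo a b, z q ∉ edge2 ξ) →
      ∀ s ∈ Set.Ioo a b, ∀ t ∈ Set.Ioo a b, u₂ s = u₂ t)
    (t : ℝ) (ht : t ∈ Set.Icc (0 : ℝ) T) :
    sSup (pVarSums 1 y (Set.Icc 0 t)) =
      ‖v₁‖ * (u₁ t - u₁ 0) + ‖v₂‖ * (u₂ t - u₂ 0) := by
  set W : ℝ → ℝ := fun s => ‖v₁‖ * u₁ s + ‖v₂‖ * u₂ s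
  have hsub : Icc 0 t ⊆ Icc 0 T := Icc_subset_Icc_right ht.2
  have hdiff : ∀ s ∈ Icc 0 T, ∀ r ∈ Icc 0 T,
      y r - y s = (u₁ r - u₁ s) • v₁ + (u₂ r - u₂ s) • v₂ := fun s hs r hr => by
    rw [hy r hr, hy s hs]; module
  have hle : ∀ s ∈ Icc 0 t, ∀ r ∈ Icc 0 t, s ≤ r → ‖y r - y s‖ ≤ W r - W s :=
    fun s hs r hr hsr => by
      rw [hdiff s (hsub hs) r (hsub hr)]
      convert norm_smul_add_smul_le (sub_nonneg.2 (hu₁m (hsub hs) (hsub hr) hsr))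
        (sub_nonneg.2 (hu₂m (hsub hs) (hsub hr) hsr)) v₁ v₂ using 1
      ring
  have heq : ∀ c ∈ Ioo 0 t, ∀ᶠ x in 𝓝 (c, c),
      x.1 ≤ x.2 → ‖y x.2 - y x.1‖ = W x.2 - W x.1 := fun c hc => by
    have hcT : c ∈ Ioo 0 T := ⟨hc.1, hc.2.trans_le ht.2⟩
    have hIcc : Icc 0 T ×ˢ Icc 0 T ∈ 𝓝 (c, c) :=
      prod_mem_nhds (Icc_mem_nhds hcT.1 hcT.2) (Icc_mem_nhds hcT.1 hcT.2)
    filter_upwards [hIcc, eventually_eq_or_eq_of_wedge hξ0 hξ hflat1 hflat2 hcT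
      (hzc.continuousAt (Icc_mem_nhds hcT.1 hcT.2)) (hz0 c hcT)] with x ⟨hs, hr⟩ hfrozen hsr
    rw [hdiff _ hs _ hr, norm_smul_add_smul_of_eq_zero_or (sub_nonneg.2 (hu₁m hs hr hsr))
      (sub_nonneg.2 (hu₂m hs hr hsr)) 
      (hfrozen.imp (fun h => sub_eq_zero.2 h.symm) (fun h => sub_eq_zero.2 h.symm))]
    ring
  have hW : ContinuousOn W (Icc 0 t) :=
    ((continuousOn_const.mul hu₁c).add (continuousOn_const.mul hu₂c)).mono hsub
  rw [sSup_pVarSums_one_eq ht.1 hW hle heq]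
  ring

/-- if `y = u₁ v₁ + u₂ v₂` with `u_j` continuous nondecreasing functions
increasing only when the continuous path `z` (which avoids the vertex on `(0,T)`)
is on the respective boundary edge of the wedge, then the total variation of `y` on
`[0,t]` is `‖v₁‖(u₁(t)-u₁(0)) + ‖v₂‖(u₂(t)-u₂(0))`. -/
theorem stmt5 (ξ : ℝ) (hξ0 : 0 < ξ) (hξ : ξ < 2 * π) (T : ℝ) (hT : 0 < T)
    (v₁ v₂ : EuclideanSpace ℝ (Fin 2))
    (z y : ℝ → EuclideanSpace ℝ (Fin 2)) (u₁ u₂ : ℝ → ℝ)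
    (hzc : ContinuousOn z (Set.Icc 0 T))
    (hzS : ∀ s ∈ Set.Icc (0 : ℝ) T, z s ∈ wedge ξ)
    (hz0 : ∀ s ∈ Set.Ioo (0 : ℝ) T, z s ≠ 0)
    (hu₁c : ContinuousOn u₁ (Set.Icc 0 T)) (hu₂c : ContinuousOn u₂ (Set.Icc 0 T))
    (hu₁m : MonotoneOn u₁ (Set.Icc 0 T)) (hu₂m : MonotoneOn u₂ (Set.Icc 0 T))
    (hy : ∀ s ∈ Set.Icc (0 : ℝ) T, y s = u₁ s • v₁ + u₂ s • v₂)
    (hflat1 : ∀ a b : ℝ, 0 ≤ a → a ≤ b → b ≤ T →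
      (∀ q ∈ Set.Ioo a b, z q ∉ edge1) →
      ∀ s ∈ Set.Ioo a b, ∀ t ∈ Set.Ioo a b, u₁ s = u₁ t)
    (hflat2 : ∀ a b : ℝ, 0 ≤ a → a ≤ b → b ≤ T →
      (∀ q ∈ Set.Ioo a b, z q ∉ edge2 ξ) →
      ∀ s ∈ Set.Ioo a b, ∀ t ∈ Set.Ioo a b, u₂ s = u₂ t)
    (t : ℝ) (ht : t ∈ Set.Icc (0 : ℝ) T) :
    sSup (pVarSums 1 y (Set.Icc 0 t)) =
      ‖v₁‖ * (u₁ t - u₁ 0) + ‖v₂‖ * (u₂ t - u₂ 0) :=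
  stmt5_general ξ hξ0 hξ T v₁ v₂ z y u₁ u₂ hzc hz0 hu₁c hu₂c hu₁m hu₂m hy hflat1 hflat2 t ht
end

section
/- Let 0 < ξ < 2π, −π/2 < θ₁, θ₂ < π/2 with α := (θ₁+θ₂)/ξ satisfying 1 < α < 2. Let v₁ have polar angle β₁ = θ₁ + π/2 and v₂ have polar angle β₂ = −(π/2 − ξ + θ₂), with v₁, v₂ ≠ 0. Then ξ < β₁ < π, −(π−ξ) < β₂ < 0, and β₁ − β₂ > π; consequently, for any vector v₀ in the interior of the wedge S = {(r,θ) : r ≥ 0, 0 ≤ θ ≤ ξ} with v₀ ≠ 0, the closed convex hull of {a v₀ : a ≥ 0} ∪ {a v₁ : a ≥ 0} ∪ {a v₂ : a ≥ 0} equals ℝ². -/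
open Real

/-- The ray `{a • v : a ≥ 0}` spanned by `v`. -/
def ray (v : EuclideanSpace ℝ (Fin 2)) : Set (EuclideanSpace ℝ (Fin 2)) :=
  {w | ∃ a : ℝ, 0 ≤ a ∧ w = a • v}

/-
Three rays whose consecutive angular gaps are all smaller than `π` positively span the plane:
a vector whose polar angle lies in an arc of length `< π` between two of the rays is a
nonnegative combination of them, by the identity
`sin (γ₂ - φ) e(γ₁) + sin (φ - γ₁) e(γ₂) = sin (γ₂ - γ₁) e(φ)` for unit vectors `e(·)`.
The angle conditions on `β₁, β₂` make the gaps `β₁ - θ`, `θ - β₂` and `2π - (β₁ - β₂)` all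
smaller than `π`.
-/

noncomputable def polarDir (θ : ℝ) : EuclideanSpace ℝ (Fin 2) := !₂[cos θ, sin θ]

lemma polarDir_periodic : Function.Periodic polarDir (2 * π) := fun θ => by
  simp only [polarDir, cos_add_two_pi, sin_add_two_pi]

lemma eq_smul_polarDir_iff {v : EuclideanSpace ℝ (Fin 2)} {r θ : ℝ} :
    v = r • polarDir θ ↔ v 0 = r * cos θ ∧ v 1 = r * sin θ := by
  constructor
  · rintro rfl
    simp [polarDir]
  · rintro ⟨h0, h1⟩
    ext i
    fin_cases i <;> simp [polarDir, h0, h1]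

lemma exists_eq_smul_polarDir (v : EuclideanSpace ℝ (Fin 2)) :
    ∃ s φ : ℝ, 0 ≤ s ∧ v = s • polarDir φ := by
  set z : ℂ := ⟨v 0, v 1⟩
  exact ⟨‖z‖, Complex.arg z, norm_nonneg z, eq_smul_polarDir_iff.mpr
    ⟨(Complex.norm_mul_cos_arg z).symm, (Complex.norm_mul_sin_arg z).symm⟩⟩

lemma sin_sub_smul_polarDir_add_sin_sub_smul_polarDir (γ₁ γ₂ φ : ℝ) :
    sin (γ₂ - φ) • polarDir γ₁ + sin (φ - γ₁) • polarDir γ₂ = sin (γ₂ - γ₁) • polarDir φ := by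
  ext i
  fin_cases i <;> simp [polarDir, sin_sub] <;> ring

lemma ray_smul {v : EuclideanSpace ℝ (Fin 2)} {r : ℝ} (hr : 0 < r) : ray (r • v) = ray v := by
  ext w
  constructor
  · rintro ⟨a, ha, rfl⟩
    exact ⟨a * r, by positivity, (mul_smul a r v).symm⟩
  · rintro ⟨a, ha, rfl⟩
    exact ⟨a / r, by positivity, by rw [smul_smul, div_mul_cancel₀ a hr.ne']⟩

lemma smul_add_smul_mem_convexHull {S : Set (EuclideanSpace ℝ (Fin 2))}
    {u v : EuclideanSpace ℝ (Fin 2)} {a b : ℝ} (ha : 0 ≤ a) (hb : 0 ≤ b)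
    (hu : ray u ⊆ S) (hv : ray v ⊆ S) : a • u + b • v ∈ convexHull ℝ S := by
  have h := convex_convexHull ℝ S
    (subset_convexHull ℝ S (hu ⟨2 * a, by positivity, rfl⟩))
    (subset_convexHull ℝ S (hv ⟨2 * b, by positivity, rfl⟩))
    (by norm_num : (0 : ℝ) ≤ 1 / 2) (by norm_num : (0 : ℝ) ≤ 1 / 2) (by norm_num)
  convert h using 1
  module

lemma smul_polarDir_mem_convexHull {S : Set (EuclideanSpace ℝ (Fin 2))} {γ₁ γ₂ φ s : ℝ}
    (hs : 0 ≤ s) (h₁₂ : γ₁ < γ₂) (hπ : γ₂ - γ₁ < π) (h₁ : γ₁ ≤ φ) (h₂ : φ ≤ γ₂)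
    (hS₁ : ray (polarDir γ₁) ⊆ S) (hS₂ : ray (polarDir γ₂) ⊆ S) :
    s • polarDir φ ∈ convexHull ℝ S := by
  have hD : 0 < sin (γ₂ - γ₁) := sin_pos_of_pos_of_lt_pi (by linarith) hπ
  have hs₁ : 0 ≤ sin (γ₂ - φ) := sin_nonneg_of_nonneg_of_le_pi (by linarith) (by linarith)
  have hs₂ : 0 ≤ sin (φ - γ₁) := sin_nonneg_of_nonneg_of_le_pi (by linarith) (by linarith)
  have hcomb : s • polarDir φ = (s / sin (γ₂ - γ₁) * sin (γ₂ - φ)) • polarDir γ₁ +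
      (s / sin (γ₂ - γ₁) * sin (φ - γ₁)) • polarDir γ₂ := by
    rw [mul_smul, mul_smul, ← smul_add, sin_sub_smul_polarDir_add_sin_sub_smul_polarDir,
      smul_smul, div_mul_cancel₀ s hD.ne']
  rw [hcomb]
  exact smul_add_smul_mem_convexHull (by positivity) (by positivity) hS₁ hS₂

theorem convexHull_ray_polarDir_eq_univ {γ₀ γ₁ γ₂ : ℝ} (h₂₀ : γ₂ < γ₀) (h₀₁ : γ₀ < γ₁)
    (h₂₀π : γ₀ - γ₂ < π) (h₀₁π : γ₁ - γ₀ < π) (h₁₂π : γ₂ + 2 * π - γ₁ < π) :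
    convexHull ℝ (ray (polarDir γ₀) ∪ ray (polarDir γ₁) ∪ ray (polarDir γ₂)) = Set.univ := by
  refine Set.eq_univ_of_forall fun w => ?_
  obtain ⟨s, φ, hs, rfl⟩ := exists_eq_smul_polarDir w
  set S := ray (polarDir γ₀) ∪ ray (polarDir γ₁) ∪ ray (polarDir γ₂)
  have hS₀ : ray (polarDir γ₀) ⊆ S := fun _ h => Or.inl (Or.inl h)
  have hS₁ : ray (polarDir γ₁) ⊆ S := fun _ h => Or.inl (Or.inr h)
  have hS₂ : ray (polarDir γ₂) ⊆ S := fun _ h => Or.inr h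
  have hS₂' : ray (polarDir (γ₂ + 2 * π)) ⊆ S := polarDir_periodic γ₂ ▸ hS₂
  -- move `φ` into the window `[γ₂, γ₂ + 2π)`
  obtain ⟨hψ₂, hψ₂'⟩ := toIcoMod_mem_Ico two_pi_pos γ₂ φ
  rw [← polarDir_periodic.sub_zsmul_eq (toIcoDiv two_pi_pos γ₂ φ),
    self_sub_toIcoDiv_zsmul]
  set ψ := toIcoMod two_pi_pos γ₂ φ
  rcases le_or_gt ψ γ₀ with hψ₀ | hψ₀
  · exact smul_polarDir_mem_convexHull hs h₂₀ h₂₀π hψ₂ hψ₀ hS₂ hS₀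
  rcases le_or_gt ψ γ₁ with hψ₁ | hψ₁
  · exact smul_polarDir_mem_convexHull hs h₀₁ h₀₁π hψ₀.le hψ₁ hS₀ hS₁
  · exact smul_polarDir_mem_convexHull hs (by linarith) (by linarith) hψ₁.le hψ₂'.le hS₁ hS₂'

theorem stmt7_general (ξ θ₁ θ₂ : ℝ) (hξ0 : 0 < ξ)
    (hθ₁u : θ₁ < π / 2)
    (hθ₂u : θ₂ < π / 2)
    (hα1 : 1 < (θ₁ + θ₂) / ξ)
    (β₁ β₂ : ℝ) (hβ₁ : β₁ = θ₁ + π / 2) (hβ₂ : β₂ = -(π / 2 - ξ + θ₂))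
    (v₁ v₂ : EuclideanSpace ℝ (Fin 2)) (hv₁ : v₁ ≠ 0) (hv₂ : v₂ ≠ 0)
    (hv₁p : v₁ 0 = ‖v₁‖ * Real.cos β₁ ∧ v₁ 1 = ‖v₁‖ * Real.sin β₁)
    (hv₂p : v₂ 0 = ‖v₂‖ * Real.cos β₂ ∧ v₂ 1 = ‖v₂‖ * Real.sin β₂) :
    (ξ < β₁ ∧ β₁ < π) ∧ (-(π - ξ) < β₂ ∧ β₂ < 0) ∧ π < β₁ - β₂ ∧
      ∀ v₀ : EuclideanSpace ℝ (Fin 2), v₀ ≠ 0 →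
        (∃ r θ : ℝ, 0 < r ∧ 0 < θ ∧ θ < ξ ∧
          v₀ 0 = r * Real.cos θ ∧ v₀ 1 = r * Real.sin θ) →
        closure (convexHull ℝ (ray v₀ ∪ ray v₁ ∪ ray v₂)) = Set.univ := by
  have hξθ : ξ < θ₁ + θ₂ := by linarith [(one_lt_div hξ0).mp hα1]
  refine ⟨⟨by linarith, by linarith⟩, ⟨by linarith, by linarith⟩, by linarith, ?_⟩
  rintro v₀ - ⟨r, θ, hr, hθ0, hθξ, hv₀p⟩
  rw [eq_smul_polarDir_iff.mpr hv₀p, eq_smul_polarDir_iff.mpr hv₁p,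
    eq_smul_polarDir_iff.mpr hv₂p, ray_smul hr, ray_smul (norm_pos_iff.mpr hv₁),
    ray_smul (norm_pos_iff.mpr hv₂), convexHull_ray_polarDir_eq_univ (by linarith)
    (by linarith) (by linarith) (by linarith) (by linarith), closure_univ]

/-- with `1 < α = (θ₁+θ₂)/ξ < 2` and the reflection vectors `v₁, v₂` having
polar angles `β₁ = θ₁ + π/2` and `β₂ = -(π/2 - ξ + θ₂)`, we have `ξ < β₁ < π`,
`-(π-ξ) < β₂ < 0` and `β₁ - β₂ > π`; consequently for any nonzero `v₀` in the interior
of the wedge, the closed convex hull of the three rays spanned by `v₀, v₁, v₂` is `ℝ²`. -/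
theorem stmt7 (ξ θ₁ θ₂ : ℝ) (hξ0 : 0 < ξ) (hξ : ξ < 2 * π)
    (hθ₁l : -(π / 2) < θ₁) (hθ₁u : θ₁ < π / 2)
    (hθ₂l : -(π / 2) < θ₂) (hθ₂u : θ₂ < π / 2)
    (hα1 : 1 < (θ₁ + θ₂) / ξ) (hα2 : (θ₁ + θ₂) / ξ < 2)
    (β₁ β₂ : ℝ) (hβ₁ : β₁ = θ₁ + π / 2) (hβ₂ : β₂ = -(π / 2 - ξ + θ₂))
    (v₁ v₂ : EuclideanSpace ℝ (Fin 2)) (hv₁ : v₁ ≠ 0) (hv₂ : v₂ ≠ 0)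
    (hv₁p : v₁ 0 = ‖v₁‖ * Real.cos β₁ ∧ v₁ 1 = ‖v₁‖ * Real.sin β₁)
    (hv₂p : v₂ 0 = ‖v₂‖ * Real.cos β₂ ∧ v₂ 1 = ‖v₂‖ * Real.sin β₂) :
    (ξ < β₁ ∧ β₁ < π) ∧ (-(π - ξ) < β₂ ∧ β₂ < 0) ∧ π < β₁ - β₂ ∧
      ∀ v₀ : EuclideanSpace ℝ (Fin 2), v₀ ≠ 0 →
        (∃ r θ : ℝ, 0 < r ∧ 0 < θ ∧ θ < ξ ∧
          v₀ 0 = r * Real.cos θ ∧ v₀ 1 = r * Real.sin θ) →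
        closure (convexHull ℝ (ray v₀ ∪ ray v₁ ∪ ray v₂)) = Set.univ :=
  stmt7_general ξ θ₁ θ₂ hξ0 hθ₁u hθ₂u hα1 β₁ β₂ hβ₁ hβ₂ v₁ v₂ hv₁ hv₂ hv₁p hv₂p
end

section
/- Let t ↦ ℓ(t) be a right-continuous, nondecreasing, unbounded function ℝ≥0 → ℝ≥0 with ℓ(0) = 0, and define its right-continuous inverse ℓ⁻¹(a) = inf{t ≥ 0 : ℓ(t) > a}. Then for all 0 ≤ a ≤ b, ℓ⁻¹(b) = ℓ⁻¹(a) + inf{u ≥ 0 : ℓ(ℓ⁻¹(a) + u) − ℓ(ℓ⁻¹(a)) > b − a}, provided ℓ satisfies ℓ(ℓ⁻¹(a)) = a (which holds if ℓ is also continuous). -/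
open Set

/-- additivity of the right-continuous inverse of a right-continuous,
nondecreasing, unbounded `ℓ : ℝ≥0 → ℝ≥0` with `ℓ(0) = 0` satisfying `ℓ(ℓ⁻¹(a)) = a`:
for `0 ≤ a ≤ b`, `ℓ⁻¹(b) = ℓ⁻¹(a) + inf{u ≥ 0 : ℓ(ℓ⁻¹(a)+u) - ℓ(ℓ⁻¹(a)) > b - a}`. -/
theorem stmt8 (ℓ : ℝ → ℝ)
    (hmono : MonotoneOn ℓ (Set.Ici 0)) (h0 : ℓ 0 = 0)
    (hnonneg : ∀ t ∈ Set.Ici (0 : ℝ), 0 ≤ ℓ t)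
    (hrc : ∀ t ∈ Set.Ici (0 : ℝ), ContinuousWithinAt ℓ (Set.Ici t) t)
    (hunb : ∀ M : ℝ, ∃ t : ℝ, 0 ≤ t ∧ M < ℓ t)
    (linv : ℝ → ℝ) (hlinv : ∀ a : ℝ, linv a = sInf {t : ℝ | 0 ≤ t ∧ a < ℓ t})
    (hfix : ∀ a : ℝ, 0 ≤ a → ℓ (linv a) = a)
    (a b : ℝ) (ha : 0 ≤ a) (hab : a ≤ b) :
    linv b = linv a + sInf {u : ℝ | 0 ≤ u ∧ b - a < ℓ (linv a + u) - ℓ (linv a)} := by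
  have hfa := hfix a ha
  have hla0 : 0 ≤ linv a := by
    rw [hlinv a]
    obtain ⟨t, ht0, hta⟩ := hunb a
    exact le_csInf ⟨t, ht0, hta⟩ fun t ht => ht.1
  have hSb : {t : ℝ | 0 ≤ t ∧ b < ℓ t}.Nonempty := by
    obtain ⟨t, ht0, htb⟩ := hunb b; exact ⟨t, ht0, htb⟩
  have hSbdd : BddBelow {t : ℝ | 0 ≤ t ∧ b < ℓ t} := ⟨0, fun t ht => ht.1⟩
  have key : ∀ t, 0 ≤ t → b < ℓ t → linv a ≤ t := by
    intro t ht0 htb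
    by_contra h
    push_neg at h
    have := hmono (mem_Ici.2 ht0) (mem_Ici.2 hla0) h.le
    rw [hfa] at this
    linarith
  have hset : {u : ℝ | 0 ≤ u ∧ b - a < ℓ (linv a + u) - ℓ (linv a)}
      = {u : ℝ | 0 ≤ u ∧ b < ℓ (linv a + u)} := by
    ext u
    rw [Set.mem_setOf_eq, Set.mem_setOf_eq, hfa, sub_lt_sub_iff_right]
  rw [hset, hlinv b]
  have hU : {u : ℝ | 0 ≤ u ∧ b < ℓ (linv a + u)}.Nonempty := by
    obtain ⟨t, ht0, htb⟩ := hunb b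
    refine ⟨t - linv a, by linarith [key t ht0 htb], by simpa using htb⟩
  have hUbdd : BddBelow {u : ℝ | 0 ≤ u ∧ b < ℓ (linv a + u)} := ⟨0, fun u hu => hu.1⟩
  apply le_antisymm
  · rw [← sub_le_iff_le_add']
    refine le_csInf hU fun u hu => ?_
    rw [sub_le_iff_le_add']
    exact csInf_le hSbdd ⟨by linarith [hu.1, hla0], hu.2⟩
  · refine le_csInf hSb fun t ht => ?_
    rw [← le_sub_iff_add_le']
    exact csInf_le hUbdd ⟨by linarith [key t ht.1 ht.2], by simpa using ht.2⟩
end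

section
/- Let u : ℝ≥0 → ℝ² be continuous and let (z_n, u_n) be a sequence of pairs of continuous functions converging uniformly on compact sets to (z, u), where each u_n has both components nondecreasing, and for j = 1,2 each u_{n,j} is constant on any open interval (a,b) on which z_n avoids a fixed closed set F_j ⊆ ℝ² (i.e., z_n(q) ∉ F_j for q ∈ (a,b)). Then u has both components nondecreasing, and for j = 1,2, u_j is constant on any open interval (a,b) such that z(q) ∉ F_j for all q ∈ (a,b). -/
open Set Filter Topology

/-!
Monotonicity passes to pointwise limits. For flatness, shrink `(a, b)` to a compact
`[s', t']` containing the two times: `zl` is continuous there as a uniform limit of continuous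
maps, so `zl '' [s', t']` is a compact set disjoint from the closed `F j` and has a whole
`δ`-thickening outside `F j`. Uniform convergence puts `z n` in that thickening on `[s', t']`
for large `n`, so `u n` is flat there, and the limit `ul` is flat as well.
-/

def ConstOnIntervalsAvoiding {X Y : Type*} (z : ℝ → X) (C : Set X) (v : ℝ → Y) : Prop :=
  ∀ a b : ℝ, 0 ≤ a → (∀ q : ℝ, a < q → q < b → z q ∉ C) →
    ∀ s ∈ Ioo a b, ∀ t ∈ Ioo a b, v s = v t

theorem tendstoUniformlyOn_of_forall_norm_sub_le {α E : Type*} [SeminormedAddCommGroup E]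
    {f : ℕ → α → E} {g : α → E} {s : Set α}
    (h : ∀ ε > (0 : ℝ), ∃ N : ℕ, ∀ n ≥ N, ∀ x ∈ s, ‖f n x - g x‖ ≤ ε) :
    TendstoUniformlyOn f g atTop s := by
  refine Metric.tendstoUniformlyOn_iff.2 fun ε hε => ?_
  obtain ⟨N, hN⟩ := h (ε / 2) (half_pos hε)
  filter_upwards [eventually_ge_atTop N] with n hn x hx
  rw [dist_comm, dist_eq_norm]
  linarith [hN n hn x hx]

theorem TendstoUniformlyOn.eventually_forall_notMem {ι α X : Type*} [TopologicalSpace α]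
    [PseudoMetricSpace X] {l : Filter ι} {f : ι → α → X} {g : α → X} {K : Set α} {C : Set X}
    (hf : TendstoUniformlyOn f g l K) (hK : IsCompact K) (hg : ContinuousOn g K)
    (hC : IsClosed C) (hgC : ∀ q ∈ K, g q ∉ C) :
    ∀ᶠ n in l, ∀ q ∈ K, f n q ∉ C := by
  obtain ⟨δ, hδ, hthick⟩ := (hK.image_of_continuousOn hg).exists_thickening_subset_open
    hC.isOpen_compl (image_subset_iff.2 hgC)
  filter_upwards [Metric.tendstoUniformlyOn_iff.1 hf δ hδ] with n hn q hq
  exact hthick (Metric.mem_thickening_iff.2 ⟨g q, mem_image_of_mem g hq, by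
    rw [dist_comm]; exact hn q hq⟩)

theorem ConstOnIntervalsAvoiding.of_tendsto {X Y : Type*} [PseudoMetricSpace X]
    [TopologicalSpace Y] [T2Space Y] {z : ℕ → ℝ → X} {zl : ℝ → X} {v : ℕ → ℝ → Y}
    {vl : ℝ → Y} {C : Set X} (hC : IsClosed C) (hzc : ∀ n, Continuous (z n))
    (hz : ∀ m, TendstoUniformlyOn z zl atTop (Icc 0 m))
    (hv : ∀ t, 0 ≤ t → Tendsto (fun n => v n t) atTop (𝓝 (vl t)))
    (hflat : ∀ n, ConstOnIntervalsAvoiding (z n) C (v n)) :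
    ConstOnIntervalsAvoiding zl C vl := by
  intro a b ha hzl s hs t ht
  obtain ⟨s', has', hs'⟩ := exists_between (lt_min hs.1 ht.1)
  obtain ⟨t', ht', ht'b⟩ := exists_between (max_lt hs.2 ht.2)
  have hs'0 : 0 ≤ s' := ha.trans has'.le
  have hK : Icc s' t' ⊆ Icc 0 t' := Icc_subset_Icc_left hs'0
  have hzlc : ContinuousOn zl (Icc s' t') :=
    ((hz t').continuousOn (Frequently.of_forall fun n => (hzc n).continuousOn)).mono hK
  have hzn : ∀ᶠ n in atTop, ∀ q ∈ Icc s' t', z n q ∉ C :=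
    ((hz t').mono hK).eventually_forall_notMem isCompact_Icc hzlc hC
      fun q hq => hzl q (has'.trans_le hq.1) (hq.2.trans_lt ht'b)
  have hs'' : s ∈ Ioo s' t' := ⟨hs'.trans_le (min_le_left s t), (le_max_left s t).trans_lt ht'⟩
  have ht'' : t ∈ Ioo s' t' := ⟨hs'.trans_le (min_le_right s t), (le_max_right s t).trans_lt ht'⟩
  refine tendsto_nhds_unique_of_eventuallyEq (hv s (hs'0.trans hs''.1.le))
    (hv t (hs'0.trans ht''.1.le)) ?_
  filter_upwards [hzn] with n hn
  exact hflat n s' t' hs'0 (fun q h1 h2 => hn q ⟨h1.le, h2.le⟩) s hs'' t ht''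

theorem stmt16_general (z : ℕ → ℝ → EuclideanSpace ℝ (Fin 2)) (u : ℕ → ℝ → Fin 2 → ℝ)
    (zl : ℝ → EuclideanSpace ℝ (Fin 2)) (ul : ℝ → Fin 2 → ℝ)
    (F : Fin 2 → Set (EuclideanSpace ℝ (Fin 2))) (hF : ∀ j, IsClosed (F j))
    (hzc : ∀ n, Continuous (z n))
    (hconv : ∀ m : ℝ, ∀ ε > (0 : ℝ), ∃ N : ℕ, ∀ n ≥ N, ∀ t ∈ Set.Icc (0 : ℝ) m,
      ‖z n t - zl t‖ ≤ ε ∧ ∀ j, |u n t j - ul t j| ≤ ε)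
    (hmono : ∀ n j, MonotoneOn (fun t => u n t j) (Set.Ici 0))
    (hflat : ∀ n, ∀ j, ∀ a b : ℝ, 0 ≤ a →
      (∀ q : ℝ, a < q → q < b → z n q ∉ F j) →
      ∀ s ∈ Set.Ioo a b, ∀ t ∈ Set.Ioo a b, u n s j = u n t j) :
    (∀ j, MonotoneOn (fun t => ul t j) (Set.Ici 0)) ∧
      ∀ j, ∀ a b : ℝ, 0 ≤ a →
        (∀ q : ℝ, a < q → q < b → zl q ∉ F j) →
        ∀ s ∈ Set.Ioo a b, ∀ t ∈ Set.Ioo a b, ul s j = ul t j := by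
  have hz (m : ℝ) : TendstoUniformlyOn z zl atTop (Icc 0 m) :=
    tendstoUniformlyOn_of_forall_norm_sub_le fun ε hε =>
      (hconv m ε hε).imp fun _ hN n hn t ht => (hN n hn t ht).1
  have hu (j : Fin 2) (t : ℝ) (ht : 0 ≤ t) : Tendsto (fun n => u n t j) atTop (𝓝 (ul t j)) :=
    (tendstoUniformlyOn_of_forall_norm_sub_le (f := fun n q => u n q j) (g := fun q => ul q j)
      (s := Icc 0 t) fun ε hε =>
        (hconv t ε hε).imp fun _ hN n hn q hq => (hN n hn q hq).2 j).tendsto_at ⟨ht, le_rfl⟩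
  exact ⟨fun j => monotoneOn_of_frequently_monotoneOn_of_tendsto
      (Frequently.of_forall fun n => hmono n j) (hu j),
    fun j => ConstOnIntervalsAvoiding.of_tendsto (hF j) hzc hz (hu j) (hflat · j)⟩

/-- closedness of the Skorokhod-type complementarity conditions under
uniform convergence on compact sets. If `(z n, u n) → (zl, ul)` uniformly on compacts,
each `u n` has nondecreasing components, and `u n`'s `j`-th component is constant on
every open interval where `z n` avoids the closed set `F j`, then the same two
properties hold for the limit pair `(zl, ul)`. -/
theorem stmt16 (z : ℕ → ℝ → EuclideanSpace ℝ (Fin 2)) (u : ℕ → ℝ → Fin 2 → ℝ)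
    (zl : ℝ → EuclideanSpace ℝ (Fin 2)) (ul : ℝ → Fin 2 → ℝ)
    (F : Fin 2 → Set (EuclideanSpace ℝ (Fin 2))) (hF : ∀ j, IsClosed (F j))
    (hzc : ∀ n, Continuous (z n)) (huc : ∀ n, Continuous (u n))
    (hulc : Continuous ul)
    (hconv : ∀ m : ℝ, ∀ ε > (0 : ℝ), ∃ N : ℕ, ∀ n ≥ N, ∀ t ∈ Set.Icc (0 : ℝ) m,
      ‖z n t - zl t‖ ≤ ε ∧ ∀ j, |u n t j - ul t j| ≤ ε)
    (hmono : ∀ n j, MonotoneOn (fun t => u n t j) (Set.Ici 0))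
    (hflat : ∀ n, ∀ j, ∀ a b : ℝ, 0 ≤ a →
      (∀ q : ℝ, a < q → q < b → z n q ∉ F j) →
      ∀ s ∈ Set.Ioo a b, ∀ t ∈ Set.Ioo a b, u n s j = u n t j) :
    (∀ j, MonotoneOn (fun t => ul t j) (Set.Ici 0)) ∧
      ∀ j, ∀ a b : ℝ, 0 ≤ a →
        (∀ q : ℝ, a < q → q < b → zl q ∉ F j) →
        ∀ s ∈ Set.Ioo a b, ∀ t ∈ Set.Ioo a b, ul s j = ul t j :=
  stmt16_general z u zl ul F hF hzc hconv hmono hflat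
end

section
/- Let f : ℝ≥0 → ℝ≥0 be nondecreasing, right-continuous, and pure-jump in the sense that f(a) = Σ_{κ ≤ a} Δf(κ) where Δf(κ) = f(κ) − f(κ−) (with f(0−)=0), with countably many jumps. Then for 0 < q < 1, the strong q-variation satisfies V_q(f,[0,a]) = Σ_{κ ≤ a} (Δf(κ))^q for every a ≥ 0 (the sum possibly infinite). -/
/-!
For `q ≤ 1`, subadditivity of `x ↦ x ^ q` bounds the `q`-th power of an increment
`f (v (i + 1)) - f (v i)` by the sum of the `q`-th powers of the jumps in `(v i, v (i + 1)]`;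
these intervals are disjoint, so every jump up to time `a` is counted at most once.
Conversely, finitely many jumps are captured one at a time by induction on the latest of them:
since jump times are distinct, a partition point strictly between that time and all earlier
ones isolates its jump in a single increment, appended to a partition of the earlier ones.
-/

open Set
open scoped ENNReal

/-- The strong `q`-variation of `f` on `E`, valued in `ℝ≥0∞`. -/
noncomputable def pVarE (q : ℝ) (f : ℝ → ℝ) (E : Set ℝ) : ℝ≥0∞ :=
  sSup {s | ∃ n : ℕ, ∃ t : ℕ → ℝ, (∀ i ≤ n, t i ∈ E) ∧ (∀ i < n, t i ≤ t (i + 1)) ∧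
    s = ∑ i ∈ Finset.range n, (ENNReal.ofReal |f (t (i + 1)) - f (t i)|) ^ q}

namespace ENNReal

lemma rpow_sum_le_sum_rpow {ι : Type*} (s : Finset ι) (g : ι → ℝ≥0∞) {q : ℝ}
    (hq0 : 0 < q) (hq1 : q ≤ 1) : (∑ i ∈ s, g i) ^ q ≤ ∑ i ∈ s, g i ^ q := by
  classical
  induction s using Finset.induction with
  | empty => simp [zero_rpow_of_pos hq0]
  | insert a s ha ih =>
    rw [Finset.sum_insert ha, Finset.sum_insert ha]
    exact (rpow_add_le_add_rpow _ _ hq0.le hq1).trans (by gcongr)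

lemma rpow_tsum_le_tsum_rpow {ι : Type*} (g : ι → ℝ≥0∞) {q : ℝ} (hq0 : 0 < q) (hq1 : q ≤ 1) :
    (∑' i, g i) ^ q ≤ ∑' i, g i ^ q := by
  have hmono : Monotone (fun x : ℝ≥0∞ => x ^ q) := fun _ _ h => rpow_le_rpow h hq0.le
  rw [ENNReal.tsum_eq_iSup_sum, hmono.map_iSup_of_continuousAt continuous_rpow_const.continuousAt
    (zero_rpow_of_pos hq0)]
  exact iSup_le fun s => (rpow_sum_le_sum_rpow s g hq0 hq1).trans (ENNReal.sum_le_tsum s)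

end ENNReal

section pVarE

variable {q : ℝ} {f : ℝ → ℝ} {E : Set ℝ}

lemma pVarE_le_of_monotone {B : ℝ≥0∞}
    (h : ∀ (n : ℕ) (u : ℕ → ℝ), Monotone u → (∀ i, u i ∈ E) →
      ∑ i ∈ Finset.range n, (ENNReal.ofReal |f (u (i + 1)) - f (u i)|) ^ q ≤ B) :
    pVarE q f E ≤ B := by
  refine sSup_le ?_
  rintro _ ⟨n, u, hmem, hstep, rfl⟩
  have hmono : Monotone fun i => u (min i n) := by
    refine monotone_nat_of_le_succ fun i => ?_
    rcases lt_or_ge i n with hi | hi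
    · simpa [min_eq_left hi.le, min_eq_left (Nat.succ_le_of_lt hi)] using hstep i hi
    · simp [min_eq_right hi, min_eq_right (hi.trans (Nat.le_succ i))]
  refine le_of_eq_of_le (Finset.sum_congr rfl fun i hi => ?_)
    (h n _ hmono fun i => hmem _ (min_le_right i n))
  have hi := Finset.mem_range.mp hi
  simp only [min_eq_left hi.le, min_eq_left (Nat.succ_le_of_lt hi)]

lemma pVarE_add_le {F : Set ℝ} (hE : E.Nonempty) (hEF : E ⊆ F) {x y : ℝ}
    (hEx : ∀ s ∈ E, s ≤ x) (hxy : x ≤ y) (hx : x ∈ F) (hy : y ∈ F) :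
    pVarE q f E + ENNReal.ofReal |f y - f x| ^ q ≤ pVarE q f F := by
  obtain ⟨s₀, hs₀⟩ := hE
  unfold pVarE
  rw [ENNReal.sSup_add]
  swap
  · exact ⟨0, 0, fun _ => s₀, fun _ _ => hs₀, fun _ h => absurd h (Nat.not_lt_zero _),
      by simp⟩
  refine iSup₂_le ?_
  rintro _ ⟨n, u, hmem, hstep, rfl⟩
  set v : ℕ → ℝ := fun i => if i ≤ n then u i else if i = n + 1 then x else y with hv
  have hvu : ∀ i ≤ n, v i = u i := fun i hi => if_pos hi
  have hvx : v (n + 1) = x := by simp [hv]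
  have hvy : v (n + 2) = y := by simp [hv]
  refine le_sSup_of_le ⟨n + 2, v, fun i hi => ?_, fun i hi => ?_, rfl⟩ ?_
  · rcases (show i ≤ n ∨ i = n + 1 ∨ i = n + 2 by omega) with hi | rfl | rfl
    · exact hvu i hi ▸ hEF (hmem i hi)
    · exact hvx ▸ hx
    · exact hvy ▸ hy
  · rcases (show i < n ∨ i = n ∨ i = n + 1 by omega) with hi | rfl | rfl
    · rw [hvu i hi.le, hvu (i + 1) hi]
      exact hstep i hi
    · rw [hvu i le_rfl, hvx]
      exact hEx _ (hmem i le_rfl)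
    · rw [hvx, hvy]
      exact hxy
  · have hsum : ∑ i ∈ Finset.range n, ENNReal.ofReal |f (v (i + 1)) - f (v i)| ^ q =
        ∑ i ∈ Finset.range n, ENNReal.ofReal |f (u (i + 1)) - f (u i)| ^ q :=
      Finset.sum_congr rfl fun i hi => by
        rw [hvu i (Finset.mem_range.mp hi).le, hvu (i + 1) (Finset.mem_range.mp hi)]
    rw [Finset.sum_range_succ, Finset.sum_range_succ, hvy, hvx, hsum, add_assoc]
    exact add_le_add le_rfl le_add_self

end pVarE

section JumpFunction

variable {f : ℝ → ℝ} {t : ℕ → ℝ} {c : ℕ → ℝ}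

lemma ofReal_abs_sub_eq_tsum_indicator (hc : ∀ i, 0 ≤ c i)
    (hsum : ∀ a, Summable fun i => if t i ≤ a then c i else 0)
    (hf : ∀ a, f a = ∑' i, if t i ≤ a then c i else 0) {x y : ℝ} (hxy : x ≤ y) :
    ENNReal.ofReal |f y - f x| =
      ∑' i, (Ioc x y).indicator (fun _ => ENNReal.ofReal (c i)) (t i) := by
  have hnonneg : ∀ i, 0 ≤ (Ioc x y).indicator (fun _ => c i) (t i) :=
    fun i => Set.indicator_nonneg (fun _ _ => hc i) _
  have hjump : f y - f x = ∑' i, (Ioc x y).indicator (fun _ => c i) (t i) := by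
    rw [hf, hf, ← (hsum y).tsum_sub (hsum x)]
    refine tsum_congr fun i => ?_
    by_cases hx : t i ≤ x
    · simp [hx, hx.trans hxy]
    · by_cases hy : t i ≤ y <;> simp [Set.indicator_apply, hx, hy]
  have hsummable : Summable fun i => (Ioc x y).indicator (fun _ => c i) (t i) := by
    refine (hsum y).of_nonneg_of_le hnonneg fun i => ?_
    by_cases hi : t i ∈ Ioc x y
    · simp [Set.indicator_of_mem hi, hi.2]
    · rw [Set.indicator_of_notMem hi]
      split_ifs <;> simp [hc]
  rw [hjump, abs_of_nonneg (tsum_nonneg hnonneg), ENNReal.ofReal_tsum_of_nonneg hnonneg hsummable]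
  exact tsum_congr fun i => (congr_fun (Set.indicator_comp_of_zero ENNReal.ofReal_zero) (t i)).symm

lemma pVarE_le_tsum {q : ℝ} (hq0 : 0 < q) (hq1 : q ≤ 1) (hc : ∀ i, 0 ≤ c i)
    (hsum : ∀ a, Summable fun i => if t i ≤ a then c i else 0)
    (hf : ∀ a, f a = ∑' i, if t i ≤ a then c i else 0) {E : Set ℝ} {a : ℝ}
    (hE : ∀ s ∈ E, s ≤ a) :
    pVarE q f E ≤ ∑' i, if t i ≤ a then ENNReal.ofReal (c i) ^ q else 0 := by
  refine pVarE_le_of_monotone fun n v hv hvE => ?_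
  have hterm : ∀ i, ENNReal.ofReal |f (v (i + 1)) - f (v i)| ^ q ≤
      ∑' j, (Ioc (v i) (v (i + 1))).indicator (fun _ => ENNReal.ofReal (c j) ^ q) (t j) := by
    intro i
    rw [ofReal_abs_sub_eq_tsum_indicator hc hsum hf (hv i.le_succ)]
    refine (ENNReal.rpow_tsum_le_tsum_rpow _ hq0 hq1).trans_eq (tsum_congr fun j => ?_)
    exact (congr_fun (Set.indicator_comp_of_zero (g := (· ^ q))
      (ENNReal.zero_rpow_of_pos hq0)) (t j)).symm
  -- each jump time lies in at most one of the disjoint intervals `(v i, v (i + 1)]`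
  have hcount : ∀ j, ∑ i ∈ Finset.range n,
      (Ioc (v i) (v (i + 1))).indicator (fun _ => ENNReal.ofReal (c j) ^ q) (t j) ≤
      (Iic a).indicator (fun _ => ENNReal.ofReal (c j) ^ q) (t j) := by
    intro j
    rw [← Finset.indicator_biUnion_apply (Finset.range n) (fun i => Ioc (v i) (v (i + 1)))
      (hv.pairwise_disjoint_on_Ioc_succ.set_pairwise _)]
    refine Set.indicator_le_indicator_of_subset (iUnion₂_subset fun i _ => ?_)
      (fun _ => zero_le) _
    exact Ioc_subset_Iic_self.trans (Iic_subset_Iic.2 (hE _ (hvE _)))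
  calc ∑ i ∈ Finset.range n, ENNReal.ofReal |f (v (i + 1)) - f (v i)| ^ q
      ≤ ∑ i ∈ Finset.range n,
          ∑' j, (Ioc (v i) (v (i + 1))).indicator (fun _ => ENNReal.ofReal (c j) ^ q) (t j) :=
        Finset.sum_le_sum fun i _ => hterm i
    _ = ∑' j, ∑ i ∈ Finset.range n,
          (Ioc (v i) (v (i + 1))).indicator (fun _ => ENNReal.ofReal (c j) ^ q) (t j) :=
        (Summable.tsum_finsetSum fun _ _ => ENNReal.summable).symm
    _ ≤ ∑' j, (Iic a).indicator (fun _ => ENNReal.ofReal (c j) ^ q) (t j) :=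
        ENNReal.tsum_le_tsum hcount
    _ = ∑' i, if t i ≤ a then ENNReal.ofReal (c i) ^ q else 0 :=
        tsum_congr fun j => by simp only [Set.indicator_apply, mem_Iic]

lemma ofReal_le_ofReal_abs_sub_of_lt (hc : ∀ i, 0 ≤ c i)
    (hsum : ∀ a, Summable fun i => if t i ≤ a then c i else 0)
    (hf : ∀ a, f a = ∑' i, if t i ≤ a then c i else 0) {x : ℝ} {j : ℕ} (hx : x < t j) :
    ENNReal.ofReal (c j) ≤ ENNReal.ofReal |f (t j) - f x| := by
  rw [ofReal_abs_sub_eq_tsum_indicator hc hsum hf hx.le]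
  calc ENNReal.ofReal (c j)
      = (Ioc x (t j)).indicator (fun _ => ENNReal.ofReal (c j)) (t j) :=
        (Set.indicator_of_mem (mem_Ioc.2 ⟨hx, le_rfl⟩) fun _ => ENNReal.ofReal (c j)).symm
    _ ≤ _ := ENNReal.le_tsum j

lemma sum_le_pVarE_Icc {q : ℝ} (hq0 : 0 ≤ q) (ht : ∀ i, 0 < t i) (hinj : Function.Injective t)
    (hc : ∀ i, 0 ≤ c i) (hsum : ∀ a, Summable fun i => if t i ≤ a then c i else 0)
    (hf : ∀ a, f a = ∑' i, if t i ≤ a then c i else 0) (s : Finset ℕ) :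
    ∀ a, (∀ i ∈ s, t i ≤ a) → ∑ i ∈ s, ENNReal.ofReal (c i) ^ q ≤ pVarE q f (Icc 0 a) := by
  classical
  induction s using Finset.induction_on_max_value t with
  | empty => simp
  | insert j s hj hmax ih =>
    intro a ha
    have hja : t j ≤ a := ha j (Finset.mem_insert_self j s)
    have hlt : ∀ i ∈ s, t i < t j :=
      fun i hi => (hmax i hi).lt_of_ne (hinj.ne (ne_of_mem_of_not_mem hi hj))
    -- the increment of `f` over `(b, t j]` contains the whole jump `c j`
    obtain ⟨b, hb0, hsb, hbj⟩ : ∃ b, 0 ≤ b ∧ (∀ i ∈ s, t i ≤ b) ∧ b < t j := by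
      set S := insert 0 (s.image t)
      refine ⟨S.max' (Finset.insert_nonempty _ _), S.le_max' _ (Finset.mem_insert_self _ _),
        fun i hi => S.le_max' _ (Finset.mem_insert_of_mem (Finset.mem_image_of_mem t hi)),
        (S.max'_lt_iff _).2 fun y hy => ?_⟩
      rcases Finset.mem_insert.1 hy with rfl | hy
      · exact ht j
      · obtain ⟨i, hi, rfl⟩ := Finset.mem_image.1 hy
        exact hlt i hi
    calc ∑ i ∈ insert j s, ENNReal.ofReal (c i) ^ q
        = ENNReal.ofReal (c j) ^ q + ∑ i ∈ s, ENNReal.ofReal (c i) ^ q := Finset.sum_insert hj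
      _ ≤ ENNReal.ofReal |f (t j) - f b| ^ q + pVarE q f (Icc 0 b) :=
        add_le_add (ENNReal.rpow_le_rpow (ofReal_le_ofReal_abs_sub_of_lt hc hsum hf hbj) hq0)
          (ih b hsb)
      _ ≤ pVarE q f (Icc 0 a) := by
        rw [add_comm]
        exact pVarE_add_le ⟨0, left_mem_Icc.2 hb0⟩ (Icc_subset_Icc_right (hbj.le.trans hja))
          (fun _ hs => hs.2) hbj.le ⟨hb0, hbj.le.trans hja⟩ ⟨hb0.trans hbj.le, hja⟩

lemma tsum_le_pVarE_Icc {q : ℝ} (hq0 : 0 ≤ q) (ht : ∀ i, 0 < t i) (hinj : Function.Injective t)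
    (hc : ∀ i, 0 ≤ c i) (hsum : ∀ a, Summable fun i => if t i ≤ a then c i else 0)
    (hf : ∀ a, f a = ∑' i, if t i ≤ a then c i else 0) (a : ℝ) :
    ∑' i, (if t i ≤ a then ENNReal.ofReal (c i) ^ q else 0) ≤ pVarE q f (Icc 0 a) := by
  classical
  rw [ENNReal.tsum_eq_iSup_sum]
  refine iSup_le fun s => ?_
  rw [← Finset.sum_filter]
  exact sum_le_pVarE_Icc hq0 ht hinj hc hsum hf _ a fun i hi => (Finset.mem_filter.1 hi).2

end JumpFunction

theorem stmt17_general (q : ℝ) (hq0 : 0 < q) (hq1 : q < 1)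
    (f : ℝ → ℝ) (t : ℕ → ℝ) (c : ℕ → ℝ)
    (ht : ∀ i, 0 < t i) (hc : ∀ i, 0 ≤ c i) (hinj : Function.Injective t)
    (hsum : ∀ a : ℝ, Summable (fun i => if t i ≤ a then c i else 0))
    (hf : ∀ a : ℝ, f a = ∑' i : ℕ, if t i ≤ a then c i else 0)
    (a : ℝ) :
    pVarE q f (Set.Icc 0 a) =
      ∑' i : ℕ, if t i ≤ a then (ENNReal.ofReal (c i)) ^ q else 0 :=
  le_antisymm (pVarE_le_tsum hq0 hq1.le hc hsum hf fun _ hs => hs.2)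
    (tsum_le_pVarE_Icc hq0.le ht hinj hc hsum hf a)

/-- for a nondecreasing, right-continuous pure-jump function
`f(a) = ∑_{κ ≤ a} Δf(κ)` (with jump times `t i > 0` and jump sizes `c i ≥ 0`), and
`0 < q < 1`, the strong `q`-variation on `[0,a]` equals the (possibly infinite) sum
of the `q`-th powers of the jumps up to time `a`. -/
theorem stmt17 (q : ℝ) (hq0 : 0 < q) (hq1 : q < 1)
    (f : ℝ → ℝ) (t : ℕ → ℝ) (c : ℕ → ℝ)
    (ht : ∀ i, 0 < t i) (hc : ∀ i, 0 ≤ c i) (hinj : Function.Injective t)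
    (hsum : ∀ a : ℝ, Summable (fun i => if t i ≤ a then c i else 0))
    (hf : ∀ a : ℝ, f a = ∑' i : ℕ, if t i ≤ a then c i else 0)
    (a : ℝ) (ha : 0 ≤ a) :
    pVarE q f (Set.Icc 0 a) =
      ∑' i : ℕ, if t i ≤ a then (ENNReal.ofReal (c i)) ^ q else 0 :=
  stmt17_general q hq0 hq1 f t c ht hc hinj hsum hf a
end
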